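/- arXiv:2603.06405 — 3 statements merged into one kernel-verified Lean document; each statement's English description precedes it below -/
import Mathlib

section
/- In the N3DM reduction, if every one of n advertisers receives a disjoint set of slots partitioning all 3n slots, each advertiser's slot multiset has group-count vector (n₁, n₂, n₃) with n₁ + 3n₂ + 9n₃ = 13, and the total counts satisfy Σ n₁ = Σ n₂ = Σ n₃ = n over all advertisers, then every advertiser has (n₁, n₂, n₃) = (1, 1, 1). -/
theorem balanced_counts_force_one_one_one
    (n : ℕ) (n₁ n₂ n₃ : Fin n → ℕ)
    (heq : ∀ i, n₁ i + 3 * n₂ i + 9 * n₃ i = 13)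
    (h1 : ∑ i, n₁ i = n) (h2 : ∑ i, n₂ i = n) (h3 : ∑ i, n₃ i = n) :
    ∀ i, n₁ i = 1 ∧ n₂ i = 1 ∧ n₃ i = 1 := by
  have h3' : ∀ i, n₃ i = 1 := by
    have hle : ∀ i ∈ Finset.univ, n₃ i ≤ (fun _ : Fin n => 1) i := by
      intro i _; have := heq i; simp; omega
    have hsum : ∑ i, n₃ i = ∑ i : Fin n, (fun _ : Fin n => 1) i := by simp [h3]
    have := (Finset.sum_eq_sum_iff_of_le hle).mp hsum
    intro i; exact this i (Finset.mem_univ i)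
  have h2' : ∀ i, n₂ i = 1 := by
    have hle : ∀ i ∈ Finset.univ, n₂ i ≤ (fun _ : Fin n => 1) i := by
      intro i _; have := heq i; have := h3' i; simp; omega
    have hsum : ∑ i, n₂ i = ∑ i : Fin n, (fun _ : Fin n => 1) i := by simp [h2]
    have := (Finset.sum_eq_sum_iff_of_le hle).mp hsum
    intro i; exact this i (Finset.mem_univ i)
  intro i
  have := heq i; have := h3' i; have := h2' i
  refine ⟨by omega, h2' i, h3' i⟩
end

section
/- The total-regret objective is not submodular as a function of an advertiser's allocated slot set: there exist an additive influence function I with nonnegative slot weights, a demand σ > 0, payment u > 0, penalty δ ∈ [0,1), and sets S ⊆ T with x ∉ T such that the regret decrease R(S) − R(S ∪ {x}) is strictly smaller than R(T) − R(T ∪ {x}). -/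
/-- Regret of an allocation under an additive influence function. -/
noncomputable def allocRegret (w : ℕ → ℝ) (u σ δ : ℝ) (S : Finset ℕ) : ℝ :=
  if (∑ s ∈ S, w s) < σ then u * (1 - δ * (∑ s ∈ S, w s) / σ)
  else u * ((∑ s ∈ S, w s) - σ) / σ

theorem regret_not_submodular :
    ∃ (w : ℕ → ℝ) (u σ δ : ℝ) (S T : Finset ℕ) (x : ℕ),
      (∀ s, 0 ≤ w s) ∧ 0 < u ∧ 0 < σ ∧ 0 ≤ δ ∧ δ < 1 ∧
      S ⊆ T ∧ x ∉ T ∧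
      allocRegret w u σ δ S - allocRegret w u σ δ (S ∪ {x}) <
        allocRegret w u σ δ T - allocRegret w u σ δ (T ∪ {x}) := by
  refine ⟨fun _ => 1, 1, 2, 0, ∅, {0}, 1, fun _ => le_refl _ |>.trans zero_le_one, one_pos,
    two_pos, le_refl 0, zero_lt_one, Finset.empty_subset _, by decide, ?_⟩
  simp [allocRegret]
end

section
/- In the N3DM reduction with large constant c (c > n·b + total weight), an allocation has total regret zero if and only if each advertiser receives exactly one slot from each of D₁, D₂, D₃ with base weights summing to b; consequently, zero-regret allocations correspond bijectively to perfect numerical 3-dimensional matchings. -/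
/-!
As `c` exceeds every sum of base weights, an advertiser's influence `m * c + W` (with `m` the sum
of the coefficients 1, 3, 9 of its slots and `W` their base weight) equals `σ = 13 * c + b` exactly
when `m = 13` and `W = b`. Regret is nonnegative and vanishes only at influence `σ`, so zero total
regret means this holds for every advertiser. Each group consists of `n` slots shared among `n`
advertisers, and `a₀ + 3 a₁ + 9 a₂ = 13` forces `a₂ ≤ 1`, hence `a₂ = 1` for all of them; then
`a₁ = 1` and `a₀ = 1` in the same way.
-/

open Finset

noncomputable def piecewiseRegret (u δ σ w : ℝ) : ℝ :=
  if w < σ then u * (1 - δ * w / σ) else u * (w - σ) / σ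

section Regret

variable {u δ σ w : ℝ}

lemma piecewiseRegret_nonneg (hu : 0 ≤ u) (hδ : δ ≤ 1) (hσ : 0 < σ) (hw : 0 ≤ w) :
    0 ≤ piecewiseRegret u δ σ w := by
  unfold piecewiseRegret
  split_ifs with hlt
  · have : δ * w / σ ≤ 1 := (div_le_one hσ).2 (by nlinarith)
    exact mul_nonneg hu (by linarith)
  · exact div_nonneg (mul_nonneg hu (by linarith)) hσ.le

lemma piecewiseRegret_eq_zero_iff (hu : 0 < u) (hδ : δ ≤ 1) (hσ : 0 < σ) (hw : 0 ≤ w) :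
    piecewiseRegret u δ σ w = 0 ↔ w = σ := by
  unfold piecewiseRegret
  split_ifs with hlt
  · have : δ * w / σ < 1 := (div_lt_one hσ).2 (by nlinarith)
    exact iff_of_false (mul_pos hu (by linarith)).ne' hlt.ne
  · rw [div_eq_zero_iff, mul_eq_zero, sub_eq_zero]
    simp [hu.ne', hσ.ne']

lemma sum_piecewiseRegret_eq_zero_iff {ι : Type*} [Fintype ι] {w : ι → ℝ} (hu : 0 < u)
    (hδ : δ ≤ 1) (hσ : 0 < σ) (hw : ∀ i, 0 ≤ w i) :
    ∑ i, piecewiseRegret u δ σ (w i) = 0 ↔ ∀ i, w i = σ := by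
  simp only [← piecewiseRegret_eq_zero_iff hu hδ hσ (hw _)]
  simpa using sum_eq_zero_iff_of_nonneg (s := univ) fun i _ =>
    piecewiseRegret_nonneg hu.le hδ hσ (hw i)

end Regret

lemma mul_add_eq_mul_add_iff_of_lt {c : ℝ} {m k W b : ℕ} (hW : (W : ℝ) < c) (hb : (b : ℝ) < c) :
    m * c + W = k * c + b ↔ m = k ∧ W = b := by
  refine ⟨fun h => ?_, by rintro ⟨rfl, rfl⟩; rfl⟩
  have hmk : m = k := by
    by_contra hne
    rcases Nat.lt_or_gt_of_ne hne with hlt | hlt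
    · have : (m + 1 : ℝ) ≤ k := by exact_mod_cast hlt
      nlinarith [(Nat.cast_nonneg b : (0 : ℝ) ≤ b)]
    · have : (k + 1 : ℝ) ≤ m := by exact_mod_cast hlt
      nlinarith [(Nat.cast_nonneg W : (0 : ℝ) ≤ W)]
  subst hmk
  exact ⟨rfl, by exact_mod_cast add_left_cancel h⟩

lemma eq_one_of_le_one_of_sum_eq_card {ι : Type*} [Fintype ι] {f : ι → ℕ} (hf : ∀ i, f i ≤ 1)
    (hsum : ∑ i, f i = Fintype.card ι) (i : ι) : f i = 1 := by
  rw [Fintype.card_eq_sum_ones] at hsum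
  exact (sum_eq_sum_iff_of_le fun i _ => hf i).1 hsum i (mem_univ i)

lemma eq_one_of_add_three_mul_add_nine_mul_eq {ι : Type*} [Fintype ι] {a₀ a₁ a₂ : ι → ℕ}
    (h : ∀ i, a₀ i + 3 * a₁ i + 9 * a₂ i = 13)
    (h₁ : ∑ i, a₁ i = Fintype.card ι) (h₂ : ∑ i, a₂ i = Fintype.card ι) (i : ι) :
    a₀ i = 1 ∧ a₁ i = 1 ∧ a₂ i = 1 := by
  have ha₂ := eq_one_of_le_one_of_sum_eq_card (fun i => by have := h i; omega) h₂
  have ha₁ := eq_one_of_le_one_of_sum_eq_card (fun i => by have := h i; have := ha₂ i; omega) h₁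
  have := h i; have := ha₁ i; have := ha₂ i
  omega

section GroupFiber

variable {γ ι κ : Type*} [Fintype ι] [DecidableEq κ]

def groupFiber (A : γ × ι → κ) (g : γ) (i : κ) : Finset ι := {j | A (g, j) = i}

lemma sum_filter_eq_sum_groupFiber [Fintype γ] {M : Type*} [AddCommMonoid M] (A : γ × ι → κ)
    (i : κ) (f : γ × ι → M) :
    ∑ s with A s = i, f s = ∑ g, ∑ j ∈ groupFiber A g i, f (g, j) := by
  simp only [sum_filter, groupFiber, Fintype.sum_prod_type]

lemma sum_card_groupFiber [Fintype κ] (A : γ × ι → κ) (g : γ) :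
    ∑ i, #(groupFiber A g i) = Fintype.card ι :=
  (card_eq_sum_card_fiberwise fun j _ => mem_univ (A (g, j))).symm

lemma filter_eq_triple_of_groupFiber_eq_singleton [DecidableEq ι] (A : Fin 3 × ι → κ) (i : κ)
    {j k l : ι} (hj : groupFiber A 0 i = {j}) (hk : groupFiber A 1 i = {k})
    (hl : groupFiber A 2 i = {l}) :
    ({s | A s = i} : Finset (Fin 3 × ι)) =
      {((0 : Fin 3), j), ((1 : Fin 3), k), ((2 : Fin 3), l)} := by
  ext ⟨g, j'⟩
  simp only [groupFiber, Finset.ext_iff, mem_filter, mem_univ, true_and, mem_singleton]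
    at hj hk hl
  fin_cases g <;> simp [hj, hk, hl]

end GroupFiber

section Reduction

variable {ι : Type*} [Fintype ι]

lemma sum_influence_eq {κ : Type*} [DecidableEq κ] (x y z : ι → ℕ) {c : ℝ}
    {inf : Fin 3 × ι → ℝ}
    (hinf : ∀ s, inf s = if s.1 = 0 then c + (x s.2 : ℝ)
                         else if s.1 = 1 then 3 * c + (y s.2 : ℝ)
                         else 9 * c + (z s.2 : ℝ))
    (A : Fin 3 × ι → κ) (i : κ) :
    ∑ s with A s = i, inf s =
      ((#(groupFiber A 0 i) + 3 * #(groupFiber A 1 i) + 9 * #(groupFiber A 2 i) : ℕ) : ℝ) * c +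
        ((∑ j ∈ groupFiber A 0 i, x j + ∑ j ∈ groupFiber A 1 i, y j +
          ∑ j ∈ groupFiber A 2 i, z j : ℕ) : ℝ) := by
  simp only [sum_filter_eq_sum_groupFiber, Fin.sum_univ_three, hinf]
  simp only [Fin.isValue, ↓reduceIte, one_ne_zero, Fin.reduceEq, sum_add_distrib, sum_const,
    nsmul_eq_mul, Nat.cast_add, Nat.cast_mul, Nat.cast_ofNat, Nat.cast_sum]
  ring

lemma exists_triple_of_weighted_card_eq [DecidableEq ι] (x y z : ι → ℕ) (b : ℕ)
    (A : Fin 3 × ι → ι)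
    (h : ∀ i, #(groupFiber A 0 i) + 3 * #(groupFiber A 1 i) + 9 * #(groupFiber A 2 i) = 13 ∧
      ∑ j ∈ groupFiber A 0 i, x j + ∑ j ∈ groupFiber A 1 i, y j +
        ∑ j ∈ groupFiber A 2 i, z j = b)
    (i : ι) :
    ∃ j k l, ({s | A s = i} : Finset (Fin 3 × ι)) =
      {((0 : Fin 3), j), ((1 : Fin 3), k), ((2 : Fin 3), l)} ∧ x j + y k + z l = b := by
  obtain ⟨h₀, h₁, h₂⟩ := eq_one_of_add_three_mul_add_nine_mul_eq (fun i => (h i).1)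
    (sum_card_groupFiber A 1) (sum_card_groupFiber A 2) i
  obtain ⟨j, hj⟩ := card_eq_one.1 h₀
  obtain ⟨k, hk⟩ := card_eq_one.1 h₁
  obtain ⟨l, hl⟩ := card_eq_one.1 h₂
  refine ⟨j, k, l, filter_eq_triple_of_groupFiber_eq_singleton A i hj hk hl, ?_⟩
  simpa [hj, hk, hl] using (h i).2

end Reduction

theorem n3dm_reduction_zero_regret_iff_general
    (n : ℕ) (x y z : Fin n → ℕ) (b : ℕ)
    (c : ℝ) (hc : (b : ℝ) + ((∑ i, x i) + (∑ i, y i) + (∑ i, z i) : ℕ) < c)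
    (u δ : ℝ) (hu : 0 < u) (hδ1 : δ < 1)
    (inf : Fin 3 × Fin n → ℝ)
    (hinf : ∀ s, inf s = if s.1 = 0 then c + (x s.2 : ℝ)
                         else if s.1 = 1 then 3 * c + (y s.2 : ℝ)
                         else 9 * c + (z s.2 : ℝ))
    (A : Fin 3 × Fin n → Fin n)
    (w : Fin n → ℝ)
    (hw : ∀ i, w i = ∑ s ∈ Finset.univ.filter (fun s => A s = i), inf s)
    (σ : ℝ) (hσ : σ = (b : ℝ) + 13 * c)
    (R : Fin n → ℝ)
    (hR : ∀ i, R i = if w i < σ then u * (1 - δ * w i / σ)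
                     else u * (w i - σ) / σ) :
    (∑ i, R i) = 0 ↔
      ∀ i : Fin n, ∃ j k l : Fin n,
        Finset.univ.filter (fun s => A s = i) =
          {((0 : Fin 3), j), ((1 : Fin 3), k), ((2 : Fin 3), l)} ∧
        x j + y k + z l = b := by
  set F := groupFiber A
  have hbc : (b : ℝ) < c :=
    (le_add_of_nonneg_right (Nat.cast_nonneg _)).trans_lt hc
  have hWc : ∀ i, ((∑ j ∈ F 0 i, x j + ∑ j ∈ F 1 i, y j + ∑ j ∈ F 2 i, z j : ℕ) : ℝ) < c := by
    refine fun i => lt_of_le_of_lt ?_ ((le_add_of_nonneg_left (Nat.cast_nonneg b)).trans_lt hc)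
    gcongr <;> exact subset_univ _
  have hw0 : ∀ i, 0 ≤ w i := fun i => by
    rw [hw, sum_influence_eq x y z hinf]
    have hc0 : 0 ≤ c := (Nat.cast_nonneg b).trans hbc.le
    positivity
  rw [show ∑ i, R i = ∑ i, piecewiseRegret u δ σ (w i) from sum_congr rfl fun i _ => hR i,
    sum_piecewiseRegret_eq_zero_iff hu hδ1.le (by linarith [Nat.cast_nonneg (α := ℝ) b]) hw0]
  refine ⟨fun h => exists_triple_of_weighted_card_eq x y z b A fun i => ?_, fun h i => ?_⟩
  · rw [← mul_add_eq_mul_add_iff_of_lt (hWc i) hbc, ← sum_influence_eq x y z hinf, ← hw, h i, hσ]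
    push_cast; ring
  · obtain ⟨j, k, l, hA, hxyz⟩ := h i
    rw [hw, hA, sum_insert (by simp), sum_insert (by simp), sum_singleton, hinf, hinf, hinf, hσ,
      ← hxyz]
    simp only [Fin.isValue, ↓reduceIte, one_ne_zero, Fin.reduceEq, Nat.cast_add]
    ring

/-- In the N3DM reduction: zero total regret iff each advertiser gets exactly one
slot from each group, with base weights summing to `b`. -/
theorem n3dm_reduction_zero_regret_iff
    (n : ℕ) (x y z : Fin n → ℕ) (b : ℕ)
    (hb : n * b = (∑ i, x i) + (∑ i, y i) + (∑ i, z i))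
    (c : ℝ) (hc : (b : ℝ) + ((∑ i, x i) + (∑ i, y i) + (∑ i, z i) : ℕ) < c)
    (u δ : ℝ) (hu : 0 < u) (hδ0 : 0 ≤ δ) (hδ1 : δ < 1)
    (inf : Fin 3 × Fin n → ℝ)
    (hinf : ∀ s, inf s = if s.1 = 0 then c + (x s.2 : ℝ)
                         else if s.1 = 1 then 3 * c + (y s.2 : ℝ)
                         else 9 * c + (z s.2 : ℝ))
    (A : Fin 3 × Fin n → Fin n)
    (w : Fin n → ℝ)
    (hw : ∀ i, w i = ∑ s ∈ Finset.univ.filter (fun s => A s = i), inf s)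
    (σ : ℝ) (hσ : σ = (b : ℝ) + 13 * c)
    (R : Fin n → ℝ)
    (hR : ∀ i, R i = if w i < σ then u * (1 - δ * w i / σ)
                     else u * (w i - σ) / σ) :
    (∑ i, R i) = 0 ↔
      ∀ i : Fin n, ∃ j k l : Fin n,
        Finset.univ.filter (fun s => A s = i) =
          {((0 : Fin 3), j), ((1 : Fin 3), k), ((2 : Fin 3), l)} ∧
        x j + y k + z l = b :=
  n3dm_reduction_zero_regret_iff_general n x y z b c hc u δ hu hδ1 inf hinf A w hw σ hσ R hR
end
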